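/- arXiv:1712.07182 — 2 statements merged into one kernel-verified Lean document; each statement's English description precedes it below -/
import Mathlib

section
/- Let \mathcal{A} be the set of block-diagonal 4×4 matrices with two identical 2×2 blocks H of determinant absolute value 1 (acting on (x_1,x_3) and (x_2,x_4) as columns of a 2×2 matrix X). Then inf_{A ∈ \mathcal{A}} ‖A[x]‖² = 2|x_1 x_4 − x_2 x_3| for any x = (x_1,x_2,x_3,x_4) ∈ \mathbb{C}^4. -/
open Matrix

/-- Squared Euclidean (Hermitian) norm of a vector in ℂ^k. -/
noncomputable def vnormSq {k : ℕ} (v : Fin k → ℂ) : ℝ := ∑ i, ‖v i‖ ^ 2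

/-- The block-diagonal 4×4 matrix with two identical 2×2 blocks H. -/
def blockDiag2 (H : Matrix (Fin 2) (Fin 2) ℂ) : Matrix (Fin 4) (Fin 4) ℂ :=
  !![H 0 0, H 0 1, 0, 0;
     H 1 0, H 1 1, 0, 0;
     0, 0, H 0 0, H 0 1;
     0, 0, H 1 0, H 1 1]

/-!
Writing `X = !![x₀, x₂; x₁, x₃]`, the vector `(blockDiag2 H) x` lists the entries of `H * X`, so
the quantity to minimise is the squared Frobenius norm of `H * X` over `|det H| = 1`. For a
`2 × 2` matrix `M`, AM-GM gives `‖M‖_F² ≥ 2 |det M|`, and `|det (H * X)| = |det X|`. If `X` is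
invertible, `H = √|det X| • X⁻¹` turns `H * X` into a scalar matrix, where equality holds. If `X`
is singular, some `H` of determinant one kills the first row of `H * X`; rescaling the rows by
`diag(ε⁻¹, ε)` then makes the norm `ε²`-small.
-/

def frobeniusNormSq {α m n : Type*} [Norm α] [Fintype m] [Fintype n] (M : Matrix m n α) : ℝ :=
  ∑ i, ∑ j, ‖M i j‖ ^ 2

theorem two_mul_norm_det_le_frobeniusNormSq {R : Type*} [NormedCommRing R]
    (M : Matrix (Fin 2) (Fin 2) R) : 2 * ‖M.det‖ ≤ frobeniusNormSq M := by
  have hdet : ‖M.det‖ ≤ ‖M 0 0‖ * ‖M 1 1‖ + ‖M 0 1‖ * ‖M 1 0‖ := by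
    rw [det_fin_two]
    exact (norm_sub_le _ _).trans (add_le_add (norm_mul_le _ _) (norm_mul_le _ _))
  simp only [frobeniusNormSq, Fin.sum_univ_two]
  nlinarith [sq_nonneg (‖M 0 0‖ - ‖M 1 1‖), sq_nonneg (‖M 0 1‖ - ‖M 1 0‖)]

theorem frobeniusNormSq_smul_one {R n : Type*} [NormedRing R] [Fintype n] [DecidableEq n]
    (c : R) : frobeniusNormSq (c • (1 : Matrix n n R)) = Fintype.card n * ‖c‖ ^ 2 := by
  simp [frobeniusNormSq, one_apply, apply_ite (‖·‖), ite_pow]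

theorem frobeniusNormSq_diagonal_mul_of_row_zero {R : Type*} [NormedRing R] [NormMulClass R]
    {M : Matrix (Fin 2) (Fin 2) R} (hM : M 0 = 0) (a c : R) :
    frobeniusNormSq (diagonal ![a, c] * M) = ‖c‖ ^ 2 * frobeniusNormSq M := by
  have h0 : ∀ j, M 0 j = 0 := fun j => congrFun hM j
  simp [frobeniusNormSq, Fin.sum_univ_two, h0, mul_pow, mul_add]

theorem exists_norm_det_eq_one_mul_eq_smul_one {X : Matrix (Fin 2) (Fin 2) ℂ} (hX : X.det ≠ 0) :
    ∃ H : Matrix (Fin 2) (Fin 2) ℂ, ‖H.det‖ = 1 ∧ H * X = (√‖X.det‖ : ℂ) • 1 := by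
  have hXu : IsUnit X.det := isUnit_iff_ne_zero.mpr hX
  refine ⟨(√‖X.det‖ : ℂ) • X⁻¹, ?_, by rw [smul_mul_assoc, nonsing_inv_mul X hXu]⟩
  rw [det_smul, det_nonsing_inv, Fintype.card_fin, norm_mul, norm_pow, Ring.inverse_eq_inv',
    norm_inv, Complex.norm_real, Real.norm_of_nonneg (Real.sqrt_nonneg _),
    Real.sq_sqrt (norm_nonneg _), mul_inv_cancel₀ (norm_ne_zero_iff.mpr hX)]

open ComplexConjugate in
theorem exists_det_eq_one_mul_row_zero {X : Matrix (Fin 2) (Fin 2) ℂ} (hX : X.det = 0) :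
    ∃ H : Matrix (Fin 2) (Fin 2) ℂ, H.det = 1 ∧ (H * X) 0 = 0 := by
  obtain ⟨w, hw, hwX⟩ := exists_vecMul_eq_zero_iff.mpr hX
  set s : ℝ := ‖w 0‖ ^ 2 + ‖w 1‖ ^ 2
  have hs : (s : ℂ) ≠ 0 := by
    have : w 0 ≠ 0 ∨ w 1 ≠ 0 := by
      by_contra! h
      exact hw (by ext i; fin_cases i <;> simp [h.1, h.2])
    have : 0 < s := by rcases this with h | h <;> positivity
    exact_mod_cast this.ne'
  refine ⟨!![w 0, w 1; -conj (w 1) / s, conj (w 0) / s], ?_, ?_⟩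
  · rw [det_fin_two_of]
    field_simp
    simp only [s, Complex.ofReal_add, Complex.ofReal_pow, ← Complex.mul_conj']
    ring
  · ext j
    simpa [Matrix.mul_apply, vecMul, dotProduct, Fin.sum_univ_two] using congrFun hwX j

theorem vnormSq_blockDiag2_mulVec (H : Matrix (Fin 2) (Fin 2) ℂ) (x : Fin 4 → ℂ) :
    vnormSq (blockDiag2 H *ᵥ x) = frobeniusNormSq (H * !![x 0, x 2; x 1, x 3]) := by
  simp only [vnormSq, frobeniusNormSq, blockDiag2, mulVec, dotProduct, Matrix.mul_apply,
    Fin.sum_univ_four, Fin.sum_univ_two, of_apply, cons_val', cons_val_fin_one, cons_val_zero,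
    cons_val_one, cons_val, zero_mul, add_zero, zero_add]
  ring

theorem exists_norm_det_eq_one_frobeniusNormSq_mul_lt (X : Matrix (Fin 2) (Fin 2) ℂ) {w : ℝ}
    (hw : 2 * ‖X.det‖ < w) :
    ∃ H : Matrix (Fin 2) (Fin 2) ℂ, ‖H.det‖ = 1 ∧ frobeniusNormSq (H * X) < w := by
  by_cases hX : X.det = 0
  · obtain ⟨H, hH, hHX⟩ := exists_det_eq_one_mul_row_zero hX
    rw [hX, norm_zero, mul_zero] at hw
    set C := frobeniusNormSq (H * X)
    have hC : 0 ≤ C := by unfold C frobeniusNormSq; positivity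
    set ε := √(w / (C + 1))
    have hε : 0 < ε := Real.sqrt_pos.mpr (by positivity)
    refine ⟨diagonal ![(ε : ℂ)⁻¹, ε] * H, ?_, ?_⟩
    · have hεC : (ε : ℂ) ≠ 0 := by exact_mod_cast hε.ne'
      simp [det_mul, det_diagonal, Fin.prod_univ_two, hH, hεC]
    · rw [Matrix.mul_assoc, frobeniusNormSq_diagonal_mul_of_row_zero hHX, Complex.norm_real,
        Real.norm_of_nonneg hε.le, Real.sq_sqrt (by positivity), div_mul_eq_mul_div,
        div_lt_iff₀ (by positivity)]
      nlinarith
  · obtain ⟨H, hH, hHX⟩ := exists_norm_det_eq_one_mul_eq_smul_one hX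
    refine ⟨H, hH, ?_⟩
    rwa [hHX, frobeniusNormSq_smul_one, Fintype.card_fin, Complex.norm_real,
      Real.norm_of_nonneg (Real.sqrt_nonneg _), Real.sq_sqrt (norm_nonneg _), Nat.cast_ofNat]

/-- For 𝒜 the set of block-diagonal 4×4 matrices with two identical invertible
2×2 blocks H with |det H| = 1, the reduced norm of x ∈ ℂ⁴ is
inf_{A ∈ 𝒜} ‖A[x]‖² = 2|x₁x₄ − x₂x₃|. -/
theorem reduced_norm_mimo_block (x : Fin 4 → ℂ) :
    sInf {r : ℝ | ∃ H : Matrix (Fin 2) (Fin 2) ℂ, IsUnit H ∧ ‖H.det‖ = 1 ∧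
        r = vnormSq ((blockDiag2 H).mulVec x)}
      = 2 * ‖x 0 * x 3 - x 1 * x 2‖ := by
  set X : Matrix (Fin 2) (Fin 2) ℂ := !![x 0, x 2; x 1, x 3]
  have hdet : x 0 * x 3 - x 1 * x 2 = X.det := by rw [det_fin_two_of]; ring
  simp only [vnormSq_blockDiag2_mulVec, hdet]
  apply csInf_eq_of_forall_ge_of_forall_gt_exists_lt
  · exact ⟨_, 1, isUnit_one, by simp, rfl⟩
  · rintro _ ⟨H, -, hH, rfl⟩
    calc 2 * ‖X.det‖ = 2 * ‖(H * X).det‖ := by rw [det_mul, norm_mul, hH, one_mul]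
      _ ≤ frobeniusNormSq (H * X) := two_mul_norm_det_le_frobeniusNormSq _
  · intro w hw
    obtain ⟨H, hH, hlt⟩ := exists_norm_det_eq_one_frobeniusNormSq_mul_lt X hw
    have hunit : IsUnit H := (isUnit_iff_isUnit_det H).mpr
      (isUnit_iff_ne_zero.mpr (norm_ne_zero_iff.mp (hH ▸ one_ne_zero)))
    exact ⟨_, ⟨H, hunit, hH, rfl⟩, hlt⟩
end

section
/- For a 2×2 complex matrix X, the infimum of the squared Frobenius norm ‖HX‖_F² over all H ∈ GL_2(\mathbb{C}) with |det H| = 1 equals 2|det X|. -/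
/-!
A matrix `H` with `|det H| = 1` does not change `|det X|`, and for any `2 × 2` matrix `M` we have
`2 |det M| ≤ |m₀₀|² + |m₀₁|² + |m₁₀|² + |m₁₁|²` by AM-GM; this is the lower bound.
For the upper bound, unimodular row operations bring `X` to the form `R = [[a, b], [0, d]]` with
`b d = 0`, and `diag(c, c⁻¹) R` has squared Frobenius norm `|c|² m + n / |c|²` where
`m = |a|² + |b|²`, `n = |d|²` and `m n = |det X|²`. Optimising over `|c|²` against the perturbed
values `m + δ`, `n + δ` and letting `δ → 0` gives `2 √(m n)`, which handles singular `X` as well.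
-/

open Matrix Filter Topology

lemma two_mul_norm_det_le_sum_sq {R : Type*} [NormedCommRing R] (M : Matrix (Fin 2) (Fin 2) R) :
    2 * ‖M.det‖ ≤ ∑ i, ∑ j, ‖M i j‖ ^ 2 := by
  have h := (norm_sub_le _ _).trans
    (add_le_add (norm_mul_le (M 0 0) (M 1 1)) (norm_mul_le (M 0 1) (M 1 0)))
  rw [det_fin_two]
  simp only [Fin.sum_univ_two]
  nlinarith [sq_nonneg (‖M 0 0‖ - ‖M 1 1‖), sq_nonneg (‖M 0 1‖ - ‖M 1 0‖)]

lemma exists_det_eq_one_mul_eq_upperTriangular {K : Type*} [Field K]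
    (X : Matrix (Fin 2) (Fin 2) K) :
    ∃ G : Matrix (Fin 2) (Fin 2) K,
      G.det = 1 ∧ (G * X) 1 0 = 0 ∧ (G * X) 0 1 * (G * X) 1 1 = 0 := by
  obtain ⟨G, hG, h10⟩ : ∃ G : Matrix (Fin 2) (Fin 2) K, G.det = 1 ∧ (G * X) 1 0 = 0 := by
    by_cases h : X 0 0 = 0
    · exact ⟨!![0, -1; 1, 0], by simp [det_fin_two], by simp [mul_apply, h]⟩
    · refine ⟨!![1, 0; -(X 1 0 / X 0 0), 1], by simp [det_fin_two], ?_⟩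
      simp only [mul_apply, Fin.sum_univ_two, of_apply, cons_val', cons_val_zero, cons_val_one,
        cons_val_fin_one]
      field_simp
      ring
  generalize hR : G * X = R at h10
  -- for `R 1 1 = 0` the shear is the identity, since `R 0 1 / 0 = 0`
  refine ⟨!![1, -(R 0 1 / R 1 1); 0, 1] * G, by rw [det_mul, hG, det_fin_two_of]; ring, ?_⟩
  simp only [Matrix.mul_assoc, hR]
  refine ⟨by simp [mul_apply, h10], ?_⟩
  rcases eq_or_ne (R 1 1) 0 with h | h <;> simp [mul_apply, h]

lemma sum_sq_norm_diagonal_mul {𝕜 : Type*} [NormedField 𝕜] (R : Matrix (Fin 2) (Fin 2) 𝕜)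
    (h10 : R 1 0 = 0) (c : 𝕜) :
    ∑ i, ∑ j, ‖(diagonal ![c, c⁻¹] * R) i j‖ ^ 2
      = ‖c‖ ^ 2 * (‖R 0 0‖ ^ 2 + ‖R 0 1‖ ^ 2) + ‖R 1 1‖ ^ 2 / ‖c‖ ^ 2 := by
  simp only [diagonal_mul, Fin.sum_univ_two, cons_val_zero, cons_val_one, cons_val_fin_one, h10,
    norm_mul, norm_inv, norm_zero, mul_pow, inv_pow]
  ring

lemma sq_norm_det_of_upperTriangular {𝕜 : Type*} [NormedField 𝕜] (R : Matrix (Fin 2) (Fin 2) 𝕜)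
    (h10 : R 1 0 = 0) (h0111 : R 0 1 * R 1 1 = 0) :
    (‖R 0 0‖ ^ 2 + ‖R 0 1‖ ^ 2) * ‖R 1 1‖ ^ 2 = ‖R.det‖ ^ 2 := by
  rw [det_fin_two, h10, mul_zero, sub_zero, add_mul, ← mul_pow, ← mul_pow, ← norm_mul, ← norm_mul,
    h0111, norm_zero]
  ring

lemma exists_mul_add_div_le {m n a b : ℝ} (ha : 0 < a) (hb : 0 < b) (hm : m ≤ a ^ 2)
    (hn : n ≤ b ^ 2) : ∃ u > 0, u * m + n / u ≤ 2 * (a * b) := by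
  refine ⟨b / a, by positivity, ?_⟩
  calc b / a * m + n / (b / a) ≤ b / a * a ^ 2 + b ^ 2 / (b / a) := by gcongr
    _ = 2 * (a * b) := by field_simp; ring

lemma csInf_le_two_sqrt_mul {S : Set ℝ} (hS : BddBelow S) {m n : ℝ} (hm : 0 ≤ m) (hn : 0 ≤ n)
    (h : ∀ u > 0, u * m + n / u ∈ S) : sInf S ≤ 2 * √(m * n) := by
  have hlim : Tendsto (fun δ : ℝ => 2 * (√(m + δ) * √(n + δ))) (𝓝[>] 0) (𝓝 (2 * √(m * n))) := by
    have : Continuous (fun δ : ℝ => 2 * (√(m + δ) * √(n + δ))) := by fun_prop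
    simpa [Real.sqrt_mul hm] using (this.tendsto 0).mono_left nhdsWithin_le_nhds
  refine ge_of_tendsto hlim ?_
  filter_upwards [self_mem_nhdsWithin] with δ (hδ : 0 < δ)
  obtain ⟨u, hu, hle⟩ := exists_mul_add_div_le (m := m) (n := n) (a := √(m + δ)) (b := √(n + δ))
    (by positivity) (by positivity) (by rw [Real.sq_sqrt] <;> linarith)
    (by rw [Real.sq_sqrt] <;> linarith)
  exact (csInf_le hS (h u hu)).trans hle

lemma exists_isUnit_sum_sq_norm_mul_eq {𝕜 : Type*} [RCLike 𝕜] {G X : Matrix (Fin 2) (Fin 2) 𝕜}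
    (hG : G.det = 1) (h10 : (G * X) 1 0 = 0) {u : ℝ} (hu : 0 < u) :
    ∃ H : Matrix (Fin 2) (Fin 2) 𝕜, IsUnit H ∧ ‖H.det‖ = 1 ∧
      u * (‖(G * X) 0 0‖ ^ 2 + ‖(G * X) 0 1‖ ^ 2) + ‖(G * X) 1 1‖ ^ 2 / u
        = ∑ i, ∑ j, ‖(H * X) i j‖ ^ 2 := by
  set c : 𝕜 := ((√u : ℝ) : 𝕜)
  have hc : ‖c‖ ^ 2 = u := by simp [c, Real.sq_sqrt hu.le]
  have hdet : (diagonal ![c, c⁻¹] * G).det = 1 := by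
    have : c ≠ 0 := by simpa [c] using (Real.sqrt_pos.2 hu).ne'
    simp [det_mul, hG, this]
  refine ⟨diagonal ![c, c⁻¹] * G, (isUnit_iff_isUnit_det _).2 (by simp [hdet]), by simp [hdet], ?_⟩
  rw [Matrix.mul_assoc, sum_sq_norm_diagonal_mul _ h10, hc]

/-- For a 2×2 complex matrix X, the infimum of the squared Frobenius norm ‖HX‖_F²
over all invertible H with |det H| = 1 equals 2|det X|. -/
theorem inf_frobenius_det_one (X : Matrix (Fin 2) (Fin 2) ℂ) :
    sInf {r : ℝ | ∃ H : Matrix (Fin 2) (Fin 2) ℂ, IsUnit H ∧ ‖H.det‖ = 1 ∧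
        r = ∑ i, ∑ j, ‖(H * X) i j‖ ^ 2}
      = 2 * ‖X.det‖ := by
  set S := {r : ℝ | ∃ H : Matrix (Fin 2) (Fin 2) ℂ, IsUnit H ∧ ‖H.det‖ = 1 ∧
        r = ∑ i, ∑ j, ‖(H * X) i j‖ ^ 2}
  have hlower : ∀ r ∈ S, 2 * ‖X.det‖ ≤ r := by
    rintro _ ⟨H, -, hH, rfl⟩
    simpa [det_mul, hH] using two_mul_norm_det_le_sum_sq (H * X)
  obtain ⟨G, hG, h10, h0111⟩ := exists_det_eq_one_mul_eq_upperTriangular X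
  refine le_antisymm ?_ (le_csInf ⟨_, 1, isUnit_one, by simp, rfl⟩ hlower)
  calc sInf S ≤ 2 * √((‖(G * X) 0 0‖ ^ 2 + ‖(G * X) 0 1‖ ^ 2) * ‖(G * X) 1 1‖ ^ 2) :=
        csInf_le_two_sqrt_mul ⟨_, hlower⟩ (by positivity) (by positivity)
          fun u hu => exists_isUnit_sum_sq_norm_mul_eq hG h10 hu
    _ = 2 * ‖X.det‖ := by
      rw [sq_norm_det_of_upperTriangular _ h10 h0111, Real.sqrt_sq (norm_nonneg _), det_mul, hG,
        one_mul]
end
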